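/- Assume events E1 and E2 hold (for radius sequence r = 1, c, c^2, ...), with E1 stating that any point within original distance r of q has projected distance below tr, and E2 stating that fewer than βn points outside B(q, cr) have projected distance below tr. Let r_opt be the first radius in the sequence such that the set C(r_opt) of points with projected distance to q below t·r_opt has size at least 1 + βn. Then the closest point to q among C(r_opt) has original distance at most c^2·r*, where r* is the distance from q to its exact nearest neighbor. -/
import Mathlib


/-- assume events E1 and E2 hold for the radius sequence `1, c, c², ...`:
E1: any point within original distance `c^j` of `q` has projected distance below `t c^j`;
E2: fewer than `β n` points outside `B(q, c ⋅ c^j)` have projected distance below `t c^j`.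
If `c^J` is the first radius whose candidate set `C(c^J) = {i | pd i < t c^J}` has at least
`1 + β n` points, then some point of `C(c^J)` has original distance to `q` at most `c² r*`,
where `r*` is the exact nearest-neighbor distance. -/
theorem pm_lsh_c_sq_approximation
    (d n : ℕ) (D : Fin n → EuclideanSpace ℝ (Fin d)) (q : EuclideanSpace ℝ (Fin d))
    (c t β : ℝ) (hc : 1 < c) (ht : 0 < t) (hβ : 0 ≤ β)
    (pd : Fin n → ℝ)
    (hE1 : ∀ (j : ℕ) (i : Fin n), dist (D i) q ≤ c ^ j → pd i < t * c ^ j)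
    (hE2 : ∀ j : ℕ,
      (({i : Fin n | c * c ^ j < dist (D i) q ∧ pd i < t * c ^ j}.ncard : ℝ)) < β * n)
    (J : ℕ)
    (hJ : β * n + 1 ≤ (({i : Fin n | pd i < t * c ^ J}.ncard : ℝ)))
    (hJfirst : ∀ j < J, (({i : Fin n | pd i < t * c ^ j}.ncard : ℝ)) < β * n + 1)
    (rstar : ℝ) (istar : Fin n) (hstar : dist (D istar) q = rstar)
    (hmin : ∀ i, rstar ≤ dist (D i) q) :
    ∃ i : Fin n, pd i < t * c ^ J ∧ dist (D i) q ≤ c ^ 2 * rstar := by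

  have hrstar0 : 0 ≤ rstar := hstar ▸ dist_nonneg
  have hc0 : (0:ℝ) < c := lt_trans one_pos hc
  by_cases hcase : rstar ≤ c ^ J
  · refine ⟨istar, hE1 J istar (hstar ▸ hcase), ?_⟩
    rw [hstar]
    exact le_mul_of_one_le_left hrstar0 (one_le_pow₀ hc.le)
  · push_neg at hcase
    -- counting: some candidate has dist ≤ c * c^J
    have hsubne : ¬ ({i : Fin n | pd i < t * c ^ J} ⊆
        {i : Fin n | c * c ^ J < dist (D i) q ∧ pd i < t * c ^ J}) := by
      intro hsub
      have := Set.ncard_le_ncard hsub (Set.toFinite _)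
      have : ((({i : Fin n | pd i < t * c ^ J}.ncard : ℕ)) : ℝ) ≤
          (({i : Fin n | c * c ^ J < dist (D i) q ∧ pd i < t * c ^ J}.ncard : ℝ)) := by
        exact_mod_cast this
      linarith [hE2 J, hJ]
    rw [Set.not_subset] at hsubne
    obtain ⟨i, hi, hni⟩ := hsubne
    simp only [Set.mem_setOf_eq, not_and] at hi hni
    have hdi : dist (D i) q ≤ c * c ^ J := by
      by_contra h
      exact hni (lt_of_not_ge h) hi
    refine ⟨i, hi, ?_⟩
    have : c * c ^ J ≤ c * (c * rstar) := by
      have : c ^ J ≤ c * rstar := le_of_lt (lt_trans hcase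
        (lt_mul_of_one_lt_left (lt_of_le_of_lt (pow_nonneg hc0.le J) hcase) hc))
      nlinarith
    calc dist (D i) q ≤ c * c ^ J := hdi
      _ ≤ c * (c * rstar) := this
      _ = c ^ 2 * rstar := by ring
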